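/- MGDA acute-angle property: if v₁, v₂ ∈ ℝⁿ and w = λ* v₁ + (1 − λ*) v₂ where λ* ∈ (0,1) is the unconstrained minimizer of λ ↦ ‖λ v₁ + (1−λ) v₂‖² (i.e., λ* = ((v₂ − v₁)ᵀ v₂)/‖v₁ − v₂‖²), and w ≠ 0, then wᵀv₁ = wᵀv₂ = ‖w‖² > 0, so w forms an acute angle with both v₁ and v₂. -/

import Mathlib

open RealInnerProductSpace

/- Writing `w = v₂ + λ (v₁ - v₂)`, the choice of `λ` is exactly the first-order condition
`⟪w, v₁ - v₂⟫ = 0`: `w` is the foot of the perpendicular from `0` to the line through `v₁, v₂`.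
Then `⟪w, v₁⟫ = ⟪w, v₂⟫`, and since `w` is an affine combination of `v₁, v₂` both equal `⟪w, w⟫`. -/

section

variable {E : Type*} [NormedAddCommGroup E] [InnerProductSpace ℝ E]

theorem inner_sub_eq_zero_of_eq_div {v₁ v₂ : E} (hne : v₁ ≠ v₂) {lam : ℝ}
    (hlam : lam = ⟪v₂ - v₁, v₂⟫ / ‖v₁ - v₂‖ ^ 2) :
    ⟪lam • v₁ + (1 - lam) • v₂, v₁ - v₂⟫ = 0 := by
  have hd : ‖v₁ - v₂‖ ^ 2 ≠ 0 := pow_ne_zero 2 (norm_ne_zero_iff.mpr (sub_ne_zero.mpr hne))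
  have hlam' : lam * ‖v₁ - v₂‖ ^ 2 = ⟪v₂ - v₁, v₂⟫ := by
    rw [hlam, div_mul_cancel₀ _ hd]
  have hw : lam • v₁ + (1 - lam) • v₂ = v₂ + lam • (v₁ - v₂) := by
    rw [smul_sub, sub_smul, one_smul]; abel
  calc ⟪lam • v₁ + (1 - lam) • v₂, v₁ - v₂⟫
      = ⟪v₂, v₁ - v₂⟫ + lam * ‖v₁ - v₂‖ ^ 2 := by
        rw [hw, inner_add_left, real_inner_smul_left, real_inner_self_eq_norm_sq]
    _ = 0 := by
        rw [hlam', ← neg_sub v₂ v₁, inner_neg_right, real_inner_comm]; ring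

theorem inner_eq_norm_sq_of_inner_sub_eq_zero {v₁ v₂ : E} (lam : ℝ)
    (horth : ⟪lam • v₁ + (1 - lam) • v₂, v₁ - v₂⟫ = 0) :
    ⟪lam • v₁ + (1 - lam) • v₂, v₁⟫ = ‖lam • v₁ + (1 - lam) • v₂‖ ^ 2 ∧
      ⟪lam • v₁ + (1 - lam) • v₂, v₂⟫ = ‖lam • v₁ + (1 - lam) • v₂‖ ^ 2 := by
  set w := lam • v₁ + (1 - lam) • v₂ with hw
  have heq : ⟪w, v₁⟫ = ⟪w, v₂⟫ := by
    rwa [inner_sub_right, sub_eq_zero] at horth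
  have hnorm : ‖w‖ ^ 2 = ⟪w, v₂⟫ := by
    rw [← real_inner_self_eq_norm_sq]
    nth_rewrite 1 [hw]
    rw [inner_add_right, real_inner_smul_right, real_inner_smul_right, heq]
    ring
  exact ⟨heq.trans hnorm.symm, hnorm.symm⟩

end

theorem mgda_acute_angle_general {n : ℕ}
    (v₁ v₂ : EuclideanSpace ℝ (Fin n)) (hne : v₁ ≠ v₂)
    (lam : ℝ) (hlam : lam = ⟪v₂ - v₁, v₂⟫ / ‖v₁ - v₂‖ ^ 2)
    (w : EuclideanSpace ℝ (Fin n)) (hw : w = lam • v₁ + (1 - lam) • v₂)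
    (hw0 : w ≠ 0) :
    ⟪w, v₁⟫ = ‖w‖ ^ 2 ∧ ⟪w, v₂⟫ = ‖w‖ ^ 2 ∧ 0 < ‖w‖ ^ 2 := by
  subst hw
  obtain ⟨h₁, h₂⟩ :=
    inner_eq_norm_sq_of_inner_sub_eq_zero lam (inner_sub_eq_zero_of_eq_div hne hlam)
  exact ⟨h₁, h₂, by positivity⟩

theorem mgda_acute_angle {n : ℕ}
    (v₁ v₂ : EuclideanSpace ℝ (Fin n)) (hne : v₁ ≠ v₂)
    (lam : ℝ) (hlam : lam = ⟪v₂ - v₁, v₂⟫ / ‖v₁ - v₂‖ ^ 2)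
    (hlam01 : lam ∈ Set.Ioo (0 : ℝ) 1)
    (w : EuclideanSpace ℝ (Fin n)) (hw : w = lam • v₁ + (1 - lam) • v₂)
    (hw0 : w ≠ 0) :
    ⟪w, v₁⟫ = ‖w‖ ^ 2 ∧ ⟪w, v₂⟫ = ‖w‖ ^ 2 ∧ 0 < ‖w‖ ^ 2 :=
  mgda_acute_angle_general v₁ v₂ hne lam hlam w hw hw0
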